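/- Let A be n×n, F be m×m, g ∈ ℝ^m, H = I_m ⊗ A + F ⊗ I_n, G = g ⊗ I_n. If (F, g) is a controllable pair (i.e., the m×m matrix [g, Fg, ..., F^{m−1}g] is invertible), then the mn×mn matrix [G, HG, ..., H^{m−1}G] has rank mn; in particular (H, G) is a controllable pair with controllability index m. -/

import Mathlib

/-!
Since `1 ⊗ A` and `F ⊗ 1` commute, the binomial theorem gives
`H ^ k * G = ∑ j ≤ k, C(k, j) • ((F ^ j * g) ⊗ A ^ (k - j))`. Hence the block matrix
`[G, HG, …, H^(m-1) G]` factors as `(K ⊗ 1) * S`, where `K = [g, Fg, …, F^(m-1) g]` and `S` is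
the block matrix with `(j, k)` block `C(k, j) • A ^ (k - j)`. `K` is invertible by hypothesis, and
`S` is block upper triangular with identity diagonal blocks, so has determinant `1`.
-/

open Matrix Kronecker

/-- Horizontal concatenation of `m` blocks, each an `mn × n` matrix, into an
`mn × mn` matrix. -/
def blockConcat {m n : ℕ} (X : Fin m → Matrix (Fin m × Fin n) (Unit × Fin n) ℝ) :
    Matrix (Fin m × Fin n) (Fin m × Fin n) ℝ :=
  Matrix.of fun r c => X c.1 r ((), c.2)

theorem Finset.sum_fin_choose_mul_eq_sum_range {R : Type*} [Semiring R] {m c : ℕ} (hc : c < m)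
    (f : ℕ → R) :
    ∑ j : Fin m, (c.choose j : R) * f j = ∑ j ∈ range (c + 1), (c.choose j : R) * f j := by
  rw [Fin.sum_univ_eq_sum_range (fun j => (c.choose j : R) * f j)]
  refine (sum_subset (range_subset_range.mpr hc) fun j _ hj => ?_).symm
  rw [Nat.choose_eq_zero_of_lt (by simpa using hj), Nat.cast_zero, zero_mul]

namespace Matrix

section Kronecker

variable {R l ι : Type*} [CommSemiring R] [Fintype l] [DecidableEq l] [Fintype ι] [DecidableEq ι]

theorem kronecker_one_pow (F : Matrix l l R) (k : ℕ) :
    (F ⊗ₖ (1 : Matrix ι ι R)) ^ k = (F ^ k) ⊗ₖ 1 := by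
  induction k with
  | zero => simp
  | succ k ih => rw [pow_succ, pow_succ, ih, ← mul_kronecker_mul, one_mul]

theorem one_kronecker_pow (A : Matrix ι ι R) (k : ℕ) :
    ((1 : Matrix l l R) ⊗ₖ A) ^ k = 1 ⊗ₖ (A ^ k) := by
  induction k with
  | zero => simp
  | succ k ih => rw [pow_succ, pow_succ, ih, ← mul_kronecker_mul, one_mul]

theorem commute_kronecker_one_one_kronecker (F : Matrix l l R) (A : Matrix ι ι R) :
    Commute (F ⊗ₖ (1 : Matrix ι ι R)) ((1 : Matrix l l R) ⊗ₖ A) := by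
  simp only [Commute, SemiconjBy, ← mul_kronecker_mul, one_mul, mul_one]

theorem kroneckerSum_pow (A : Matrix ι ι R) (F : Matrix l l R) (k : ℕ) :
    ((1 : Matrix l l R) ⊗ₖ A + F ⊗ₖ (1 : Matrix ι ι R)) ^ k =
      ∑ j ∈ Finset.range (k + 1), k.choose j • ((F ^ j) ⊗ₖ (A ^ (k - j))) := by
  rw [add_comm, (commute_kronecker_one_one_kronecker F A).add_pow]
  refine Finset.sum_congr rfl fun j _ => ?_
  rw [kronecker_one_pow, one_kronecker_pow, ← mul_kronecker_mul, mul_one, one_mul,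
    nsmul_eq_mul']

omit [DecidableEq l] in
theorem kronecker_mul_replicateCol_kronecker_one (F : Matrix l l R) (A : Matrix ι ι R)
    (g : l → R) :
    (F ⊗ₖ A) * (replicateCol Unit g ⊗ₖ (1 : Matrix ι ι R)) =
      replicateCol Unit (F *ᵥ g) ⊗ₖ A := by
  rw [← mul_kronecker_mul, mul_one, replicateCol_mulVec]

theorem kroneckerSum_pow_mul_replicateCol_kronecker_one (A : Matrix ι ι R) (F : Matrix l l R)
    (g : l → R) (k : ℕ) :
    ((1 : Matrix l l R) ⊗ₖ A + F ⊗ₖ (1 : Matrix ι ι R)) ^ k *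
        (replicateCol Unit g ⊗ₖ (1 : Matrix ι ι R)) =
      ∑ j ∈ Finset.range (k + 1),
        k.choose j • (replicateCol Unit (F ^ j *ᵥ g) ⊗ₖ (A ^ (k - j))) := by
  simp only [kroneckerSum_pow, Matrix.sum_mul, Matrix.smul_mul,
    kronecker_mul_replicateCol_kronecker_one]

end Kronecker

section BinomialBlock

variable {R ι : Type*} [CommRing R] [Fintype ι] [DecidableEq ι]

def binomialBlockMatrix (m : ℕ) (A : Matrix ι ι R) : Matrix (Fin m × ι) (Fin m × ι) R :=
  of fun p q => ((q.1 : ℕ).choose p.1 : R) * (A ^ ((q.1 : ℕ) - p.1)) p.2 q.2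

theorem blockTriangular_binomialBlockMatrix (m : ℕ) (A : Matrix ι ι R) :
    (binomialBlockMatrix m A).BlockTriangular Prod.fst := by
  intro p q hqp
  simp [binomialBlockMatrix, Nat.choose_eq_zero_of_lt (show (q.1 : ℕ) < p.1 from hqp)]

theorem toSquareBlock_binomialBlockMatrix (m : ℕ) (A : Matrix ι ι R) (k : Fin m) :
    (binomialBlockMatrix m A).toSquareBlock Prod.fst k = 1 := by
  ext ⟨⟨p₁, p₂⟩, hp⟩ ⟨⟨q₁, q₂⟩, hq⟩
  obtain rfl : p₁ = k := hp
  obtain rfl : q₁ = p₁ := hq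
  simp [toSquareBlock_def, binomialBlockMatrix, one_apply, Subtype.ext_iff]

theorem det_binomialBlockMatrix (m : ℕ) (A : Matrix ι ι R) :
    (binomialBlockMatrix m A).det = 1 := by
  rw [(blockTriangular_binomialBlockMatrix m A).det_fintype]
  simp [toSquareBlock_binomialBlockMatrix]

end BinomialBlock

def controllabilityMatrix {R : Type*} [Semiring R] {m : ℕ} (F : Matrix (Fin m) (Fin m) R)
    (g : Fin m → R) : Matrix (Fin m) (Fin m) R :=
  of fun i k => (F ^ (k : ℕ) *ᵥ g) i

end Matrix

theorem blockConcat_kroneckerSum_pow_mul_eq {m n : ℕ} (A : Matrix (Fin n) (Fin n) ℝ)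
    (F : Matrix (Fin m) (Fin m) ℝ) (g : Fin m → ℝ) :
    blockConcat (fun k =>
        ((1 : Matrix (Fin m) (Fin m) ℝ) ⊗ₖ A + F ⊗ₖ (1 : Matrix (Fin n) (Fin n) ℝ)) ^ (k : ℕ) *
          (replicateCol Unit g ⊗ₖ (1 : Matrix (Fin n) (Fin n) ℝ))) =
      (controllabilityMatrix F g ⊗ₖ 1) * binomialBlockMatrix m A := by
  ext ⟨r₁, r₂⟩ ⟨c₁, c₂⟩
  simp only [blockConcat, of_apply, kroneckerSum_pow_mul_replicateCol_kronecker_one,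
    Matrix.sum_apply]
  rw [mul_apply, Fintype.sum_prod_type]
  simp only [Matrix.smul_apply, kroneckerMap_apply, replicateCol_apply, nsmul_eq_mul,
    controllabilityMatrix, binomialBlockMatrix, of_apply, one_apply, mul_ite, mul_one, mul_zero,
    ite_mul, zero_mul, Finset.sum_ite_eq, Finset.mem_univ, if_true]
  rw [← Finset.sum_fin_choose_mul_eq_sum_range c₁.isLt]
  exact Finset.sum_congr rfl fun _ _ => by ring

/-- If `(F, g)` is a controllable pair, then `(H, G)` with `H = I_m ⊗ A + F ⊗ I_n`,
`G = g ⊗ I_n` is controllable with controllability index `m`: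
the matrix `[G, HG, …, H^{m-1}G]` has full rank `mn`. -/
theorem controllable_kron (m n : ℕ) (A : Matrix (Fin n) (Fin n) ℝ)
    (F : Matrix (Fin m) (Fin m) ℝ) (g : Fin m → ℝ)
    (hctrb : IsUnit (Matrix.of fun i k : Fin m => (F ^ (k : ℕ)).mulVec g i)) :
    (blockConcat (fun k =>
        ((1 : Matrix (Fin m) (Fin m) ℝ) ⊗ₖ A + F ⊗ₖ (1 : Matrix (Fin n) (Fin n) ℝ)) ^ (k : ℕ) *
          ((Matrix.of fun i (_ : Unit) => g i) ⊗ₖ (1 : Matrix (Fin n) (Fin n) ℝ)))).rank =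
      m * n := by
  have hK : IsUnit (controllabilityMatrix F g) := hctrb
  have hS : IsUnit (binomialBlockMatrix m A) := by
    rw [isUnit_iff_isUnit_det, det_binomialBlockMatrix]
    exact isUnit_one
  rw [show (of fun i (_ : Unit) => g i) = replicateCol Unit g from rfl,
    blockConcat_kroneckerSum_pow_mul_eq,
    rank_of_isUnit _ ((hK.kronecker isUnit_one).mul hS)]
  simp
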